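/- arXiv:2204.13087 — 2 statements merged into one kernel-verified Lean document; each statement's English description precedes it below -/
import Mathlib

section
/- Let m ≥ 2 be an integer and ε = 1/(2m). For every outcome sequence y_1, y_2, … ∈ {0,1} and every forecast sequence p_1, p_2, … produced by the POTC-Cal algorithm (for any admissible choices of indices at each step), and for every T ≥ 1, the ε-calibration error satisfies max( ∑_{i=1}^m | (1/T) ∑_{t=1}^T 1{p_t = M_i} (M_i − y_t) | − ε , 0 ) ≤ m/T. -/
/-!
Setup: m ≥ 2, ε = 1/(2m), gridpoints M_i = (2i-1)/(2m), interval endpoints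
l_i = (i-1)/m and r_i = i/m. Forecasts are encoded by their index `a t ∈ {1,…,m}`,
i.e. p_t = M_{a t}.  The POTC-Cal algorithm is encoded as a predicate on the
pair of sequences (a, y).
-/

namespace Calib

/-- Gridpoint M_i = (2i-1)/(2m). -/
noncomputable def Mg (m i : ℕ) : ℝ := (2 * (i : ℝ) - 1) / (2 * m)

/-- Left endpoint l_i = (i-1)/m. -/
noncomputable def lept (m i : ℕ) : ℝ := ((i : ℝ) - 1) / m

/-- Right endpoint r_i = i/m. -/
noncomputable def rept (m i : ℕ) : ℝ := (i : ℝ) / m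

/-- N_i^t = #{1 ≤ s ≤ t : p_s = M_i}. -/
def Ncount (a : ℕ → ℕ) (i t : ℕ) : ℕ :=
  ((Finset.Icc 1 t).filter (fun s => a s = i)).card

/-- Empirical average p_i^t of the outcomes on rounds where M_i was forecast. -/
noncomputable def emp (m : ℕ) (a : ℕ → ℕ) (y : ℕ → ℝ) (i t : ℕ) : ℝ :=
  if 0 < Ncount a i t then
    (∑ s ∈ Finset.Icc 1 t, if a s = i then y s else 0) / (Ncount a i t)
  else Mg m i

/-- Deficit d_i^t = l_i - p_i^t. -/
noncomputable def defc (m : ℕ) (a : ℕ → ℕ) (y : ℕ → ℝ) (i t : ℕ) : ℝ :=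
  lept m i - emp m a y i t

/-- Excess e_i^t = p_i^t - r_i. -/
noncomputable def exc (m : ℕ) (a : ℕ → ℕ) (y : ℕ → ℝ) (i t : ℕ) : ℝ :=
  emp m a y i t - rept m i

/-- Condition A at time t: some i ∈ {1,…,m} has d_i^t ≤ 0 and e_i^t ≤ 0. -/
def condA (m : ℕ) (a : ℕ → ℕ) (y : ℕ → ℝ) (t : ℕ) : Prop :=
  ∃ i, 1 ≤ i ∧ i ≤ m ∧ defc m a y i t ≤ 0 ∧ exc m a y i t ≤ 0

/-- The POTC-Cal algorithm (binary outcomes), allowing any admissible choice of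
index at each step: p_1 = M_1; at time t+1, if condition A holds play a
witnessing M_i; otherwise pick i with e_i^t > 0 and d_{i+1}^t > 0 and play
M_i if y_{t+1} = 0 and M_{i+1} if y_{t+1} = 1. -/
def POTC (m : ℕ) (a : ℕ → ℕ) (y : ℕ → ℝ) : Prop :=
  a 1 = 1 ∧
  ∀ t, 1 ≤ t →
    (∃ i, 1 ≤ i ∧ i ≤ m ∧ defc m a y i t ≤ 0 ∧ exc m a y i t ≤ 0 ∧ a (t + 1) = i) ∨
    (¬ condA m a y t ∧
      ∃ i, 1 ≤ i ∧ i ≤ m - 1 ∧ 0 < exc m a y i t ∧ 0 < defc m a y (i + 1) t ∧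
        (y (t + 1) = 0 → a (t + 1) = i) ∧ (y (t + 1) = 1 → a (t + 1) = i + 1))

end Calib

namespace CalibAux
open Calib

noncomputable def S (m : ℕ) (a : ℕ → ℕ) (y : ℕ → ℝ) (i t : ℕ) : ℝ :=
  ∑ s ∈ Finset.Icc 1 t, if a s = i then Mg m i - y s else 0

noncomputable def Ysum (a : ℕ → ℕ) (y : ℕ → ℝ) (i t : ℕ) : ℝ :=
  ∑ s ∈ Finset.Icc 1 t, if a s = i then y s else 0

lemma Ncount_cast (a : ℕ → ℕ) (i t : ℕ) :
    ((Ncount a i t : ℝ)) = ∑ s ∈ Finset.Icc 1 t, if a s = i then (1:ℝ) else 0 := by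
  rw [Calib.Ncount, Finset.card_filter]
  push_cast
  rfl

lemma S_eq (m : ℕ) (a : ℕ → ℕ) (y : ℕ → ℝ) (i t : ℕ) :
    S m a y i t = (Ncount a i t : ℝ) * Mg m i - Ysum a y i t := by
  rw [Ncount_cast, Finset.sum_mul, S, Ysum, ← Finset.sum_sub_distrib]
  exact Finset.sum_congr rfl fun s _ => by split_ifs <;> ring

lemma S_eq' (m : ℕ) (a : ℕ → ℕ) (y : ℕ → ℝ) (i t : ℕ) (h : 0 < Ncount a i t) :
    S m a y i t = (Ncount a i t : ℝ) * (Mg m i - emp m a y i t) := by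
  have hN : ((Ncount a i t : ℝ)) ≠ 0 := Nat.cast_ne_zero.mpr h.ne'
  rw [S_eq, Calib.emp, if_pos h]
  field_simp [Ysum]
  rw [Ysum]

lemma S_zero (m : ℕ) (a : ℕ → ℕ) (y : ℕ → ℝ) (i t : ℕ) (h : Ncount a i t = 0) :
    S m a y i t = 0 := by
  have h' := Finset.card_eq_zero.mp h
  rw [Finset.filter_eq_empty_iff] at h'
  exact Finset.sum_eq_zero fun s hs => if_neg (h' hs)

lemma S_succ (m : ℕ) (a : ℕ → ℕ) (y : ℕ → ℝ) (i t : ℕ) :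
    S m a y i (t+1) = S m a y i t + (if a (t+1) = i then Mg m i - y (t+1) else 0) :=
  Finset.sum_Icc_succ_top (Nat.succ_le_succ (Nat.zero_le t)) _

lemma Ncount_succ (a : ℕ → ℕ) (i t : ℕ) :
    Ncount a i (t+1) = Ncount a i t + (if a (t+1) = i then 1 else 0) := by
  simp only [Calib.Ncount, Finset.card_filter]
  exact Finset.sum_Icc_succ_top (Nat.succ_le_succ (Nat.zero_le t)) _

lemma lept_eq (m i : ℕ) (hm : 0 < m) : lept m i = Mg m i - 1 / (2 * m) := by
  have hm' : (m : ℝ) ≠ 0 := Nat.cast_ne_zero.mpr hm.ne'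
  rw [Calib.lept, Calib.Mg]
  field_simp
  ring

lemma rept_eq (m i : ℕ) (hm : 0 < m) : rept m i = Mg m i + 1 / (2 * m) := by
  have hm' : (m : ℝ) ≠ 0 := Nat.cast_ne_zero.mpr hm.ne'
  rw [Calib.rept, Calib.Mg]
  field_simp
  ring

lemma eps_pos (m : ℕ) (hm : 0 < m) : (0:ℝ) < 1 / (2 * m) := by
  have : (0:ℝ) < m := Nat.cast_pos.mpr hm
  positivity

lemma Mg_nonneg (m i : ℕ) (hm : 0 < m) (hi : 1 ≤ i) : 0 ≤ Mg m i := by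
  have h1 : (0:ℝ) < 2 * m := by have : (0:ℝ) < m := Nat.cast_pos.mpr hm; linarith
  have h2 : (1:ℝ) ≤ i := by exact_mod_cast hi
  exact div_nonneg (by linarith) h1.le

lemma Mg_le_one (m i : ℕ) (hm : 0 < m) (him : i ≤ m) : Mg m i ≤ 1 := by
  have h1 : (0:ℝ) < 2 * m := by have : (0:ℝ) < m := Nat.cast_pos.mpr hm; linarith
  have h2 : (i:ℝ) ≤ m := by exact_mod_cast him
  rw [Calib.Mg, div_le_one h1]
  linarith

/-- If the excess is positive then `N > 0`. -/
lemma Ncount_pos_of_exc (m : ℕ) (hm : 0 < m) (a : ℕ → ℕ) (y : ℕ → ℝ) (i t : ℕ)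
    (h : 0 < exc m a y i t) : 0 < Ncount a i t := by
  by_contra hN
  have hN0 : ¬ (0 < Ncount a i t) := hN
  have : emp m a y i t = Mg m i := by rw [Calib.emp, if_neg hN0]
  rw [Calib.exc, this, rept_eq m i hm] at h
  have := eps_pos m hm
  linarith

lemma Ncount_pos_of_defc (m : ℕ) (hm : 0 < m) (a : ℕ → ℕ) (y : ℕ → ℝ) (i t : ℕ)
    (h : 0 < defc m a y i t) : 0 < Ncount a i t := by
  by_contra hN
  have hN0 : ¬ (0 < Ncount a i t) := hN
  have : emp m a y i t = Mg m i := by rw [Calib.emp, if_neg hN0]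
  rw [Calib.defc, this, lept_eq m i hm] at h
  have := eps_pos m hm
  linarith

lemma S_neg_of_exc (m : ℕ) (hm : 0 < m) (a : ℕ → ℕ) (y : ℕ → ℝ) (i t : ℕ)
    (h : 0 < exc m a y i t) : S m a y i t < 0 := by
  have hN := Ncount_pos_of_exc m hm a y i t h
  have hN' : (0:ℝ) < Ncount a i t := Nat.cast_pos.mpr hN
  rw [S_eq' m a y i t hN]
  have hε := eps_pos m hm
  rw [Calib.exc, rept_eq m i hm] at h
  have : Mg m i - emp m a y i t < 0 := by linarith
  exact mul_neg_of_pos_of_neg hN' this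

lemma S_pos_of_defc (m : ℕ) (hm : 0 < m) (a : ℕ → ℕ) (y : ℕ → ℝ) (i t : ℕ)
    (h : 0 < defc m a y i t) : 0 < S m a y i t := by
  have hN := Ncount_pos_of_defc m hm a y i t h
  have hN' : (0:ℝ) < Ncount a i t := Nat.cast_pos.mpr hN
  rw [S_eq' m a y i t hN]
  have hε := eps_pos m hm
  rw [Calib.defc, lept_eq m i hm] at h
  have : 0 < Mg m i - emp m a y i t := by linarith
  exact mul_pos hN' this

/-- In the "calibrated" situation `d ≤ 0 ∧ e ≤ 0`, `|S| ≤ N·ε`. -/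
lemma abs_S_le (m : ℕ) (hm : 0 < m) (a : ℕ → ℕ) (y : ℕ → ℝ) (i t : ℕ)
    (hd : defc m a y i t ≤ 0) (he : exc m a y i t ≤ 0) :
    |S m a y i t| ≤ (Ncount a i t : ℝ) * (1 / (2 * m)) := by
  by_cases hN : 0 < Ncount a i t
  · have hN' : (0:ℝ) ≤ Ncount a i t := Nat.cast_nonneg _
    rw [S_eq' m a y i t hN, abs_mul, abs_of_nonneg hN']
    apply mul_le_mul_of_nonneg_left _ hN'
    rw [Calib.defc, lept_eq m i hm] at hd
    rw [Calib.exc, rept_eq m i hm] at he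
    rw [abs_le]
    constructor <;> linarith
  · have h0 : Ncount a i t = 0 := Nat.eq_zero_of_not_pos hN
    rw [S_zero m a y i t h0, h0]
    simp

/-- The key invariant maintained by POTC-Cal. -/
lemma invariant (m : ℕ) (hm : 2 ≤ m) (y : ℕ → ℝ) (hy : ∀ t, y t = 0 ∨ y t = 1)
    (a : ℕ → ℕ) (halg : Calib.POTC m a y) :
    ∀ t i, 1 ≤ i → i ≤ m →
      |S m a y i t| ≤ (Ncount a i t : ℝ) * (1 / (2 * m)) + 1 := by
  have hm0 : 0 < m := lt_of_lt_of_le two_pos hm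
  have hε := eps_pos m hm0
  intro t
  induction t with
  | zero =>
    intro i _ _
    simp [S, Calib.Ncount]
  | succ t ih =>
    intro i hi1 him
    have hNn : (0:ℝ) ≤ Ncount a i t := Nat.cast_nonneg _
    have hMg0 := Mg_nonneg m i hm0 hi1
    have hMg1 := Mg_le_one m i hm0 him
    by_cases hcur : a (t+1) = i
    · -- bin i receives a new point
      rw [S_succ, if_pos hcur, Ncount_succ, if_pos hcur]
      push_cast
      have hinc : |Mg m i - y (t+1)| ≤ 1 := by
        rcases hy (t+1) with h | h <;> rw [h, abs_le] <;> constructor <;> linarith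
      -- three possible situations
      have key : |S m a y i t| ≤ (Ncount a i t : ℝ) * (1 / (2 * m)) ∨
          (S m a y i t < 0 ∧ y (t+1) = 0) ∨ (0 < S m a y i t ∧ y (t+1) = 1) := by
        rcases Nat.eq_zero_or_pos t with rfl | ht
        · left
          have h0 : Ncount a i 0 = 0 := by simp [Calib.Ncount]
          rw [S_zero m a y i 0 h0, h0]
          simp
        · rcases (halg.2 t ht) with ⟨j, hj1, hjm, hd, he, haj⟩ | ⟨_, j, hj1, hjm, he, hd, h0, h1⟩
          · left
            have hij : j = i := by rw [← haj, hcur]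
            subst hij
            exact abs_S_le m hm0 a y j t hd he
          · rcases hy (t+1) with hy0 | hy1
            · right; left
              have hij : j = i := by rw [← h0 hy0, hcur]
              subst hij
              exact ⟨S_neg_of_exc m hm0 a y j t he, hy0⟩
            · right; right
              have hij : j + 1 = i := by rw [← h1 hy1, hcur]
              subst hij
              exact ⟨S_pos_of_defc m hm0 a y (j+1) t hd, hy1⟩
      have hih := ih i hi1 him
      rcases key with hk | ⟨hk, hy0⟩ | ⟨hk, hy1⟩
      · calc |S m a y i t + (Mg m i - y (t+1))| ≤ |S m a y i t| + |Mg m i - y (t+1)| :=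
              abs_add_le _ _
          _ ≤ (Ncount a i t : ℝ) * (1 / (2 * m)) + 1 := by linarith
          _ ≤ ((Ncount a i t : ℝ) + 1) * (1 / (2 * m)) + 1 := by nlinarith
      · rw [hy0, sub_zero, abs_le]
        rw [abs_le] at hih
        constructor <;> nlinarith
      · rw [hy1, abs_le]
        rw [abs_le] at hih
        constructor <;> nlinarith
    · rw [S_succ, if_neg hcur, Ncount_succ, if_neg hcur, add_zero, add_zero]
      exact ih i hi1 him

/-- The counts over all bins sum to `T`. -/
lemma sum_Ncount (m : ℕ) (a : ℕ → ℕ) (ha : ∀ t, 1 ≤ t → 1 ≤ a t ∧ a t ≤ m) (T : ℕ) :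
    ∑ i ∈ Finset.Icc 1 m, ((Ncount a i T : ℝ)) = T := by
  simp only [Ncount_cast]
  rw [Finset.sum_comm]
  have : ∀ s ∈ Finset.Icc 1 T, (∑ i ∈ Finset.Icc 1 m, if a s = i then (1:ℝ) else 0) = 1 := by
    intro s hs
    rw [Finset.sum_ite_eq (Finset.Icc 1 m) (a s) (fun _ => (1:ℝ))]
    have hs1 : 1 ≤ s := (Finset.mem_Icc.mp hs).1
    rw [if_pos (Finset.mem_Icc.mpr (ha s hs1))]
  rw [Finset.sum_congr rfl this]
  simp

end CalibAux


/-- Theorem 3.1: POTC-Cal satisfies ε-CE_T ≤ m/T for all T ≥ 1,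
against every binary outcome sequence. -/
theorem potc_cal_fast_rate (m : ℕ) (hm : 2 ≤ m)
    (y : ℕ → ℝ) (hy : ∀ t, y t = 0 ∨ y t = 1)
    (a : ℕ → ℕ) (ha : ∀ t, 1 ≤ t → 1 ≤ a t ∧ a t ≤ m)
    (halg : Calib.POTC m a y) (T : ℕ) (hT : 1 ≤ T) :
    max ((∑ i ∈ Finset.Icc 1 m,
          |(1 / (T : ℝ)) * ∑ t ∈ Finset.Icc 1 T,
              (if a t = i then Calib.Mg m i - y t else 0)|) - 1 / (2 * m)) 0
      ≤ (m : ℝ) / T := by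
  have hm0 : 0 < m := lt_of_lt_of_le two_pos hm
  have hT0 : (0:ℝ) < T := Nat.cast_pos.mpr hT
  have hε := CalibAux.eps_pos m hm0
  have hsum : ∑ i ∈ Finset.Icc 1 m, |CalibAux.S m a y i T|
      ≤ (T : ℝ) * (1 / (2 * m)) + m := by
    calc ∑ i ∈ Finset.Icc 1 m, |CalibAux.S m a y i T|
        ≤ ∑ i ∈ Finset.Icc 1 m, ((Calib.Ncount a i T : ℝ) * (1 / (2 * m)) + 1) := by
          apply Finset.sum_le_sum
          intro i hi
          obtain ⟨hi1, him⟩ := Finset.mem_Icc.mp hi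
          exact CalibAux.invariant m hm y hy a halg T i hi1 him
      _ = (T : ℝ) * (1 / (2 * m)) + m := by
          rw [Finset.sum_add_distrib, ← Finset.sum_mul, CalibAux.sum_Ncount m a ha T]
          simp [Nat.card_Icc]
  have hLHS : (∑ i ∈ Finset.Icc 1 m,
          |(1 / (T : ℝ)) * ∑ t ∈ Finset.Icc 1 T,
              (if a t = i then Calib.Mg m i - y t else 0)|)
      = (1 / (T : ℝ)) * ∑ i ∈ Finset.Icc 1 m, |CalibAux.S m a y i T| := by
    rw [Finset.mul_sum]
    apply Finset.sum_congr rfl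
    intro i _
    rw [abs_mul, abs_of_nonneg (by positivity : (0:ℝ) ≤ 1 / (T:ℝ))]
    rfl
  rw [hLHS]
  apply max_le
  · have : (1 / (T : ℝ)) * ∑ i ∈ Finset.Icc 1 m, |CalibAux.S m a y i T|
        ≤ (1 / (T : ℝ)) * ((T : ℝ) * (1 / (2 * m)) + m) := by
      apply mul_le_mul_of_nonneg_left hsum (by positivity)
    have heq : (1 / (T : ℝ)) * ((T : ℝ) * (1 / (2 * m)) + m) = 1 / (2 * m) + m / T := by
      have hT' : (T:ℝ) ≠ 0 := hT0.ne'
      have hm' : (m:ℝ) ≠ 0 := (Nat.cast_pos.mpr hm0).ne'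
      field_simp
    linarith [heq ▸ this]
  · positivity
end

section
/- Let m ≥ 2 be an integer and ε = 1/(2m). For every outcome sequence y_1, y_2, … ∈ {0,1} and every forecast sequence produced by the POTC-Cal algorithm, for every index i ∈ {1,…,m} and every time T ≥ 1, the quantity E_T^{(i)} := N_i^T · max(d_i^T, e_i^T) satisfies E_T^{(i)} ≤ 1. -/
/-!
Work with the unnormalised quantities `D = N·d = N·l - S` and `E = N·e = S - N·r`, where `S` is the
sum of the outcomes on the rounds where `M_i` was forecast. They change only when `M_i` is played,
by `l - y ≤ 1` and `y - r ≤ 1` respectively, and `D + E = -N/m ≤ 0`. After outcome `0` the excess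
does not grow, and POTC-Cal only plays `M_i` on outcome `0` when `D ≤ 0` (in condition A directly,
in condition B because `e > 0` forces `E ≥ 0`); symmetrically for outcome `1`. Hence both stay `≤ 1`.
-/

namespace Calib

noncomputable def outcomeSum (a : ℕ → ℕ) (y : ℕ → ℝ) (i t : ℕ) : ℝ :=
  ∑ s ∈ Finset.Icc 1 t, if a s = i then y s else 0

noncomputable def cumDefc (m : ℕ) (a : ℕ → ℕ) (y : ℕ → ℝ) (i t : ℕ) : ℝ :=
  Ncount a i t * lept m i - outcomeSum a y i t

noncomputable def cumExc (m : ℕ) (a : ℕ → ℕ) (y : ℕ → ℝ) (i t : ℕ) : ℝ :=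
  outcomeSum a y i t - Ncount a i t * rept m i

variable {m : ℕ} {a : ℕ → ℕ} {y : ℕ → ℝ} {i t : ℕ}

theorem Ncount_succ :
    Ncount a i (t + 1) = Ncount a i t + if a (t + 1) = i then 1 else 0 := by
  rw [Ncount, Ncount, Finset.card_filter, Finset.card_filter,
    Finset.sum_Icc_succ_top (Nat.le_add_left 1 t)]

theorem outcomeSum_succ :
    outcomeSum a y i (t + 1) = outcomeSum a y i t + if a (t + 1) = i then y (t + 1) else 0 :=
  Finset.sum_Icc_succ_top (Nat.le_add_left 1 t) _

theorem outcomeSum_eq_zero_of_Ncount_eq_zero (h : Ncount a i t = 0) : outcomeSum a y i t = 0 := by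
  rw [outcomeSum, ← Finset.sum_filter, Finset.card_eq_zero.mp h, Finset.sum_empty]

theorem Ncount_mul_emp : (Ncount a i t : ℝ) * emp m a y i t = outcomeSum a y i t := by
  rcases Nat.eq_zero_or_pos (Ncount a i t) with h | h
  · rw [h, outcomeSum_eq_zero_of_Ncount_eq_zero h, Nat.cast_zero, zero_mul]
  · rw [emp, if_pos h, outcomeSum]
    exact mul_div_cancel₀ _ (by positivity)

theorem Ncount_mul_defc : (Ncount a i t : ℝ) * defc m a y i t = cumDefc m a y i t := by
  rw [defc, cumDefc, mul_sub, Ncount_mul_emp]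

theorem Ncount_mul_exc : (Ncount a i t : ℝ) * exc m a y i t = cumExc m a y i t := by
  rw [exc, cumExc, mul_sub, Ncount_mul_emp]

theorem cumDefc_zero : cumDefc m a y i 0 = 0 := by
  simp [cumDefc, outcomeSum, Ncount]

theorem cumExc_zero : cumExc m a y i 0 = 0 := by
  simp [cumExc, outcomeSum, Ncount]

theorem cumDefc_succ :
    cumDefc m a y i (t + 1) =
      cumDefc m a y i t + if a (t + 1) = i then lept m i - y (t + 1) else 0 := by
  rw [cumDefc, cumDefc, Ncount_succ, outcomeSum_succ]
  split_ifs <;> push_cast <;> ring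

theorem cumExc_succ :
    cumExc m a y i (t + 1) =
      cumExc m a y i t + if a (t + 1) = i then y (t + 1) - rept m i else 0 := by
  rw [cumExc, cumExc, Ncount_succ, outcomeSum_succ]
  split_ifs <;> push_cast <;> ring

theorem lept_le_rept : lept m i ≤ rept m i :=
  div_le_div_of_nonneg_right (by linarith) (Nat.cast_nonneg m)

theorem cumDefc_add_cumExc_nonpos : cumDefc m a y i t + cumExc m a y i t ≤ 0 := by
  have h : cumDefc m a y i t + cumExc m a y i t = Ncount a i t * (lept m i - rept m i) := by
    rw [cumDefc, cumExc]; ring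
  rw [h]
  exact mul_nonpos_of_nonneg_of_nonpos (Nat.cast_nonneg _) (sub_nonpos.mpr lept_le_rept)

theorem cum_succ_le_one_of_played (him : i ≤ m) (hplay : a (t + 1) = i)
    (hy : y (t + 1) = 0 ∨ y (t + 1) = 1)
    (hD : cumDefc m a y i t ≤ 1) (hE : cumExc m a y i t ≤ 1)
    (hD0 : y (t + 1) = 0 → cumDefc m a y i t ≤ 0) (hE1 : y (t + 1) = 1 → cumExc m a y i t ≤ 0) :
    cumDefc m a y i (t + 1) ≤ 1 ∧ cumExc m a y i (t + 1) ≤ 1 := by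
  have him' : (i : ℝ) ≤ m := by exact_mod_cast him
  have hl : lept m i ≤ 1 := div_le_one_of_le₀ (by linarith) (Nat.cast_nonneg m)
  have hr : 0 ≤ rept m i := by unfold rept; positivity
  rw [cumDefc_succ, cumExc_succ, if_pos hplay, if_pos hplay]
  rcases hy with hy | hy
  · have := hD0 hy
    constructor <;> linarith
  · have := hE1 hy
    constructor <;> linarith

end Calib

namespace Calib.POTC

variable {m : ℕ} {a : ℕ → ℕ} {y : ℕ → ℝ}

theorem played_cum_nonpos (halg : POTC m a y) (t : ℕ) :
    (y (t + 1) = 0 → cumDefc m a y (a (t + 1)) t ≤ 0) ∧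
      (y (t + 1) = 1 → cumExc m a y (a (t + 1)) t ≤ 0) := by
  rcases Nat.eq_zero_or_pos t with rfl | ht
  · exact ⟨fun _ => cumDefc_zero.le, fun _ => cumExc_zero.le⟩
  rcases halg.2 t ht with ⟨i, -, -, hdi, hei, hplay⟩ | ⟨-, i, -, -, hei, hdi, hplay0, hplay1⟩
  · rw [hplay, ← Ncount_mul_defc, ← Ncount_mul_exc]
    exact ⟨fun _ => mul_nonpos_of_nonneg_of_nonpos (Nat.cast_nonneg _) hdi,
      fun _ => mul_nonpos_of_nonneg_of_nonpos (Nat.cast_nonneg _) hei⟩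
  · have hEi : 0 ≤ cumExc m a y i t := Ncount_mul_exc ▸ mul_nonneg (Nat.cast_nonneg _) hei.le
    have hDi : 0 ≤ cumDefc m a y (i + 1) t :=
      Ncount_mul_defc ▸ mul_nonneg (Nat.cast_nonneg _) hdi.le
    have hsum : cumDefc m a y i t + cumExc m a y i t ≤ 0 := cumDefc_add_cumExc_nonpos
    have hsum' : cumDefc m a y (i + 1) t + cumExc m a y (i + 1) t ≤ 0 := cumDefc_add_cumExc_nonpos
    refine ⟨fun h0 => ?_, fun h1 => ?_⟩
    · rw [hplay0 h0]
      linarith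
    · rw [hplay1 h1]
      linarith

theorem cum_le_one (halg : POTC m a y) (hy : ∀ t, y t = 0 ∨ y t = 1) (t : ℕ) {j : ℕ}
    (hjm : j ≤ m) : cumDefc m a y j t ≤ 1 ∧ cumExc m a y j t ≤ 1 := by
  induction t with
  | zero => exact ⟨cumDefc_zero.trans_le zero_le_one, cumExc_zero.trans_le zero_le_one⟩
  | succ t ih =>
    by_cases hplay : a (t + 1) = j
    · obtain ⟨hD0, hE1⟩ := halg.played_cum_nonpos t
      rw [hplay] at hD0 hE1
      exact cum_succ_le_one_of_played hjm hplay (hy _) ih.1 ih.2 hD0 hE1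
    · rw [cumDefc_succ, cumExc_succ, if_neg hplay, if_neg hplay, add_zero, add_zero]
      exact ih

end Calib.POTC

theorem potc_cal_E_bound_general (m : ℕ)
    (y : ℕ → ℝ) (hy : ∀ t, y t = 0 ∨ y t = 1)
    (a : ℕ → ℕ)
    (halg : Calib.POTC m a y)
    (i : ℕ) (him : i ≤ m) (T : ℕ) :
    (Calib.Ncount a i T : ℝ) * max (Calib.defc m a y i T) (Calib.exc m a y i T) ≤ 1 := by
  obtain ⟨hD, hE⟩ := halg.cum_le_one hy T him
  rw [mul_max_of_nonneg _ _ (Nat.cast_nonneg _), Calib.Ncount_mul_defc, Calib.Ncount_mul_exc]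
  exact max_le hD hE

/-- under POTC-Cal, for every i ∈ {1,…,m} and T ≥ 1,
E_T^{(i)} = N_i^T · max(d_i^T, e_i^T) ≤ 1. -/
theorem potc_cal_E_bound (m : ℕ) (hm : 2 ≤ m)
    (y : ℕ → ℝ) (hy : ∀ t, y t = 0 ∨ y t = 1)
    (a : ℕ → ℕ) (ha : ∀ t, 1 ≤ t → 1 ≤ a t ∧ a t ≤ m)
    (halg : Calib.POTC m a y)
    (i : ℕ) (hi1 : 1 ≤ i) (him : i ≤ m) (T : ℕ) (hT : 1 ≤ T) :
    (Calib.Ncount a i T : ℝ) * max (Calib.defc m a y i T) (Calib.exc m a y i T) ≤ 1 :=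
  potc_cal_E_bound_general m y hy a halg i him T
end
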